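/- If T' ∈ fs(N, m) (i.e., T' is the support of the Parikh image of some continuous firing sequence from m), then every transition t ∈ T' has all its input places p ∈ •t satisfying: w(p) > 0 for w = m, or p ∈ s• for some s ∈ T'. Equivalently, T' ⊆ Φ_{N_{T'}, m}(T'), so T' is a postfixed point of the operator Φ. -/
import Mathlib


section PetriNet

variable {P T : Type*}

/-- Discrete enabledness: `m(p) ≥ Pre(p,t)` for all places `p`. -/
def Enabled (Pre : P → T → ℕ) (m : P → ℕ) (t : T) : Prop :=
  ∀ p, Pre p t ≤ m p

/-- Discrete firing of transition `t` at marking `m`, yielding `m'`. -/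
def DFire (Pre Post : P → T → ℕ) (m : P → ℕ) (t : T) (m' : P → ℕ) : Prop :=
  Enabled Pre m t ∧ ∀ p, m' p = m p + Post p t - Pre p t

/-- One discrete step. -/
def DStep (Pre Post : P → T → ℕ) (m m' : P → ℕ) : Prop :=
  ∃ t, DFire Pre Post m t m'

/-- Discrete reachability. -/
def DReach (Pre Post : P → T → ℕ) : (P → ℕ) → (P → ℕ) → Prop :=
  Relation.ReflTransGen (DStep Pre Post)

/-- Continuous firing of `t` by amount `q` (amount is at most the enabling degree). -/
def CFire (Pre Post : P → T → ℕ) (m : P → ℚ) (q : ℚ) (t : T) (m' : P → ℚ) : Prop :=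
  0 ≤ q ∧ (∀ p, q * (Pre p t : ℚ) ≤ m p) ∧
    ∀ p, m' p = m p + q * ((Post p t : ℚ) - (Pre p t : ℚ))

/-- One continuous step. -/
def CStep (Pre Post : P → T → ℕ) (m m' : P → ℚ) : Prop :=
  ∃ t q, CFire Pre Post m q t m'

/-- Continuous (Q-)reachability. -/
def QReach (Pre Post : P → T → ℕ) : (P → ℚ) → (P → ℚ) → Prop :=
  Relation.ReflTransGen (CStep Pre Post)

/-- A Q-firing sequence `σ` from `m` to `m'`. -/
inductive CSeq (Pre Post : P → T → ℕ) : (P → ℚ) → List (ℚ × T) → (P → ℚ) → Prop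
  | nil (m : P → ℚ) : CSeq Pre Post m [] m
  | cons {m m' m'' : P → ℚ} {q : ℚ} {t : T} {σ : List (ℚ × T)} :
      CFire Pre Post m q t m' → CSeq Pre Post m' σ m'' →
      CSeq Pre Post m ((q, t) :: σ) m''

/-- Q-Parikh image of a firing sequence. -/
def Parikh [DecidableEq T] (σ : List (ℚ × T)) (t : T) : ℚ :=
  (σ.map (fun qt => if qt.2 = t then qt.1 else 0)).sum

/-- The firing set `fs(N, m)`: supports of Parikh images of Q-firing sequences from `m`. -/
def Fs [DecidableEq T] (Pre Post : P → T → ℕ) (m : P → ℚ) : Set (Set T) :=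
  {S | ∃ σ m', CSeq Pre Post m σ m' ∧ S = {t | Parikh σ t ≠ 0}}

/-- A trap: non-empty `Q` with `Q• ⊆ •Q`. -/
def IsTrap (Pre Post : P → T → ℕ) (Q : Finset P) : Prop :=
  Q.Nonempty ∧ ∀ t, (∃ p ∈ Q, 0 < Pre p t) → ∃ p ∈ Q, 0 < Post p t

/-- A siphon: non-empty `Q` with `•Q ⊆ Q•`. -/
def IsSiphon (Pre Post : P → T → ℕ) (Q : Finset P) : Prop :=
  Q.Nonempty ∧ ∀ t, (∃ p ∈ Q, 0 < Post p t) → ∃ p ∈ Q, 0 < Pre p t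

end PetriNet

section Aux
variable {P T : Type*}

lemma cseq_nonneg {Pre Post : P → T → ℕ} {m m' : P → ℚ} {σ : List (ℚ × T)}
    (h : CSeq Pre Post m σ m') : ∀ qt ∈ σ, (0:ℚ) ≤ qt.1 := by
  induction h with
  | nil => simp
  | cons hf _ ih =>
    intro qt hqt
    rcases List.mem_cons.mp hqt with h | h
    · subst h; exact hf.1
    · exact ih _ h

lemma parikh_ne_zero_of_mem [DecidableEq T] {σ : List (ℚ × T)}
    (hnn : ∀ qt ∈ σ, (0:ℚ) ≤ qt.1) {q : ℚ} {t : T}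
    (hmem : (q, t) ∈ σ) (hq : q ≠ 0) : Parikh σ t ≠ 0 := by
  have hpos : (0:ℚ) < Parikh σ t := by
    induction σ with
    | nil => simp at hmem
    | cons a σ ih =>
      have ha : (0:ℚ) ≤ a.1 := hnn a (by simp)
      have hrest : ∀ qt ∈ σ, (0:ℚ) ≤ qt.1 := fun qt h => hnn qt (by simp [h])
      have hsum : (0:ℚ) ≤ Parikh σ t := by
        unfold Parikh
        apply List.sum_nonneg
        intro x hx
        simp only [List.mem_map] at hx
        obtain ⟨qt, hqt, rfl⟩ := hx
        split <;> [exact hrest qt hqt; rfl]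
      rcases List.mem_cons.mp hmem with h | h
      · subst h
        have hP : Parikh ((q, t) :: σ) t = q + Parikh σ t := by simp [Parikh]
        have : 0 < q := lt_of_le_of_ne ha (Ne.symm hq)
        rw [hP]; linarith
      · have := ih hrest h
        simp only [Parikh, List.map_cons, List.sum_cons]
        have h1 : (0:ℚ) ≤ if a.2 = t then a.1 else 0 := by
          split <;> [exact ha; rfl]
        unfold Parikh at this
        linarith
  exact ne_of_gt hpos

lemma exists_mem_of_parikh_ne_zero [DecidableEq T] {σ : List (ℚ × T)} {t : T}
    (h : Parikh σ t ≠ 0) : ∃ q, (q, t) ∈ σ ∧ q ≠ 0 := by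
  induction σ with
  | nil => simp [Parikh] at h
  | cons a σ ih =>
    simp only [Parikh, List.map_cons, List.sum_cons] at h
    by_cases hc : a.2 = t ∧ a.1 ≠ 0
    · exact ⟨a.1, by simp [← hc.1], hc.2⟩
    · have : (if a.2 = t then a.1 else 0) = 0 := by
        push_neg at hc
        split
        · next he => exact hc he
        · rfl
      rw [this, zero_add] at h
      obtain ⟨q, hq, hq0⟩ := ih h
      exact ⟨q, by simp [hq], hq0⟩

lemma key_lemma {Pre Post : P → T → ℕ} {m m' : P → ℚ} {σ : List (ℚ × T)}
    (h : CSeq Pre Post m σ m') (p : P) (h0 : m p = 0)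
    (hpost : ∀ qt ∈ σ, qt.1 ≠ 0 → Post p qt.2 = 0) :
    ∀ qt ∈ σ, qt.1 ≠ 0 → Pre p qt.2 = 0 := by
  induction h with
  | nil => simp
  | @cons m m' m'' q t σ hf hs ih =>
    have hq : 0 ≤ q := hf.1
    by_cases hq0 : q = 0
    · have hm' : m' p = 0 := by
        rw [hf.2.2 p, hq0]; simp [h0]
      intro qt hqt hne
      rcases List.mem_cons.mp hqt with h | h
      · subst h; exact absurd hq0 hne
      · exact ih hm' (fun qt h hn => hpost qt (by simp [h]) hn) qt h hne
    · have hqpos : 0 < q := lt_of_le_of_ne hq (Ne.symm hq0)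
      have hpost0 : Post p t = 0 := hpost (q, t) (by simp) hq0
      have hpre0 : Pre p t = 0 := by
        have := hf.2.1 p
        rw [h0] at this
        by_contra hne
        have : 0 < (Pre p t : ℚ) := by
          exact_mod_cast Nat.pos_of_ne_zero hne
        nlinarith
      have hm' : m' p = 0 := by
        rw [hf.2.2 p, h0, hpost0, hpre0]; simp
      intro qt hqt hne
      rcases List.mem_cons.mp hqt with h | h
      · subst h; exact hpre0
      · exact ih hm' (fun qt h hn => hpost qt (by simp [h]) hn) qt h hne

end Aux

/-- every `T' ∈ fs(N, m)` is a postfixed point of `Φ`: each input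
place of each `t ∈ T'` is initially marked or produced into by some `s ∈ T'`. -/
theorem stmt18 {P T : Type*} [DecidableEq T] (Pre Post : P → T → ℕ) (m : P → ℚ)
    (hm : ∀ p, 0 ≤ m p) (T' : Set T) (hT' : T' ∈ Fs Pre Post m) :
    ∀ t ∈ T', ∀ p, 0 < Pre p t → (m p ≠ 0 ∨ ∃ s ∈ T', 0 < Post p s) := by
  obtain ⟨σ, mfin, hseq, hTdef⟩ := hT'
  intro t ht p hpre
  by_contra hcon
  push_neg at hcon
  obtain ⟨hm0, hnopost⟩ := hcon
  have hnn := cseq_nonneg hseq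
  have hpost : ∀ qt ∈ σ, qt.1 ≠ 0 → Post p qt.2 = 0 := by
    intro qt hqt hne
    by_contra hp
    have hsin : qt.2 ∈ T' := by
      rw [hTdef]
      exact parikh_ne_zero_of_mem hnn (by simpa using hqt) hne
    exact hp (Nat.le_zero.mp (hnopost qt.2 hsin))
  have ht' : Parikh σ t ≠ 0 := by rw [hTdef] at ht; exact ht
  obtain ⟨q, hmem, hq⟩ := exists_mem_of_parikh_ne_zero ht'
  have := key_lemma hseq p hm0 hpost (q, t) hmem hq
  simp only at this
  omega
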